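/- For every LP^MLN program 𝔽 over 𝒫 and all interpretations Y ⊆ X ⊆ 𝒫, the following are equivalent: (a) ⟨Y, X⟩ is a soft HT model of 𝔽; (b) Y satisfies the reduct (𝔽̄_X)^X; (c) Y satisfies the reduct ({𝔽̄}^ch)^X. -/

import Mathlib

namespace LPMLN

/-- Propositional formulas over a set of atoms `P`, built from atoms and `⊥`
using `∧`, `∨`, `→`. -/
inductive Formula (P : Type) : Type where
  | atom : P → Formula P
  | bot  : Formula P
  | and  : Formula P → Formula P → Formula P
  | or   : Formula P → Formula P → Formula P
  | imp  : Formula P → Formula P → Formula P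
deriving DecidableEq

variable {P : Type} [DecidableEq P]

/-- `¬F` abbreviates `F → ⊥`. -/
def Formula.neg (F : Formula P) : Formula P := .imp F .bot

/-- Classical evaluation of a formula in an interpretation `X ⊆ P`. -/
def Formula.eval (X : Finset P) : Formula P → Bool
  | .atom p => decide (p ∈ X)
  | .bot => false
  | .and F G => F.eval X && G.eval X
  | .or F G => F.eval X || G.eval X
  | .imp F G => !(F.eval X) || G.eval X

/-- Classical satisfaction `X ⊨ F`. -/
def Formula.sat (X : Finset P) (F : Formula P) : Prop := F.eval X = true

/-- The reduct `F^X`: every maximal subformula not satisfied by `X` is replaced by `⊥`. -/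
def Formula.reduct (X : Finset P) : Formula P → Formula P
  | .atom p => if p ∈ X then .atom p else .bot
  | .bot => .bot
  | .and F G => if (Formula.and F G).eval X then .and (F.reduct X) (G.reduct X) else .bot
  | .or F G => if (Formula.or F G).eval X then .or (F.reduct X) (G.reduct X) else .bot
  | .imp F G => if (Formula.imp F G).eval X then .imp (F.reduct X) (G.reduct X) else .bot

/-- `X` satisfies a (finite) set of formulas. -/
def satSet (X : Finset P) (Γ : Finset (Formula P)) : Prop := ∀ F ∈ Γ, F.sat X

/-- The reduct `Γ^X` of a finite set of formulas. -/
def reductSet (X : Finset P) (Γ : Finset (Formula P)) : Finset (Formula P) :=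
  Γ.image (Formula.reduct X)

/-- `X` is a stable model of `Γ` if `X ⊨ Γ^X` and no proper subset of `X` satisfies `Γ^X`. -/
def StableModel (Γ : Finset (Formula P)) (X : Finset P) : Prop :=
  satSet X (reductSet X Γ) ∧ ∀ Y, Y ⊂ X → ¬ satSet Y (reductSet X Γ)

/-- A weight is a real number (soft) or the symbol `α` (hard). -/
inductive Weight : Type where
  | soft : ℝ → Weight
  | hard : Weight

noncomputable instance : DecidableEq Weight := Classical.decEq _

/-- An LP^MLN program: a finite set of weighted formulas `w : R`. -/
abbrev Program (P : Type) [DecidableEq P] := Finset (Weight × Formula P)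

/-- `𝔽_X`: the weighted formulas of `𝔽` whose formula is satisfied by `X`. -/
noncomputable def progSat (𝔽 : Program P) (X : Finset P) : Program P :=
  𝔽.filter (fun r => r.2.eval X = true)

/-- `𝔽̄`: the formulas of `𝔽`, with weights dropped. -/
noncomputable def formulas (𝔽 : Program P) : Finset (Formula P) := 𝔽.image Prod.snd

/-- `X` is a soft stable model of `𝔽` (i.e. `X ∈ SM[𝔽]`) if `X` is a stable model of `𝔽̄_X`. -/
def SoftStable (𝔽 : Program P) (X : Finset P) : Prop :=
  StableModel (formulas (progSat 𝔽 X)) X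

/-- w-expressions: either zero or a formal expression `e^{c₁ + c₂·α}` with `c₁ : ℝ`, `c₂ : ℤ`. -/
inductive WExpr : Type where
  | zero : WExpr
  | exp : ℝ → ℤ → WExpr

/-- Multiplication of w-expressions: add exponents componentwise; zero is absorbing. -/
def WExpr.mul : WExpr → WExpr → WExpr
  | .zero, _ => .zero
  | _, .zero => .zero
  | .exp a b, .exp c d => .exp (a + c) (b + d)

/-- Inverse of a w-expression: negate both exponents. -/
def WExpr.inv : WExpr → WExpr
  | .zero => .zero
  | .exp a b => .exp (-a) (-b)

/-- Evaluation of a w-expression at a real number `a`. -/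
noncomputable def WExpr.eval (a : ℝ) : WExpr → ℝ
  | .zero => 0
  | .exp c₁ c₂ => Real.exp (c₁ + c₂ * a)

/-- The real contribution of a weight (hard rules contribute `0` to the soft sum). -/
def softWeight : Weight → ℝ
  | .soft r => r
  | .hard => 0

/-- Sum of the weights of the soft rules of `𝔽`. -/
noncomputable def softSum (𝔽 : Program P) : ℝ := ∑ r ∈ 𝔽, softWeight r.1

/-- The number of hard rules of `𝔽`. -/
noncomputable def hardCount (𝔽 : Program P) : ℤ :=
  ((𝔽.filter (fun r => r.1 = Weight.hard)).card : ℤ)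

/-- `TW(𝔽) = e^{c₁ + c₂·α}` where `c₁` is the sum of the soft weights and
`c₂` the number of hard rules. -/
noncomputable def TW (𝔽 : Program P) : WExpr := .exp (softSum 𝔽) (hardCount 𝔽)

open Classical in
/-- `W_𝔽(X) = TW(𝔽_X)` if `X ∈ SM[𝔽]`, and zero otherwise. -/
noncomputable def W (𝔽 : Program P) (X : Finset P) : WExpr :=
  if SoftStable 𝔽 X then TW (progSat 𝔽 X) else .zero

open Classical in
/-- `W^pnt_𝔽(X) = TW(𝔽 \ 𝔽_X)⁻¹` if `X ∈ SM[𝔽]`, and zero otherwise. -/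
noncomputable def Wpnt (𝔽 : Program P) (X : Finset P) : WExpr :=
  if SoftStable 𝔽 X then (TW (𝔽 \ progSat 𝔽 X)).inv else .zero

/-- `P_𝔽(X)`: the limit as `a → ∞` of the normalized evaluation of `W_𝔽(X)`. -/
noncomputable def Pr [Fintype P] (𝔽 : Program P) (X : Finset P) : ℝ :=
  Filter.limUnder Filter.atTop
    (fun a : ℝ => (W 𝔽 X).eval a / ∑ Y : Finset P, (W 𝔽 Y).eval a)

/-- `P^pnt_𝔽(X)`: the limit as `a → ∞` of the normalized evaluation of `W^pnt_𝔽(X)`. -/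
noncomputable def PrPnt [Fintype P] (𝔽 : Program P) (X : Finset P) : ℝ :=
  Filter.limUnder Filter.atTop
    (fun a : ℝ => (Wpnt 𝔽 X).eval a / ∑ Y : Finset P, (Wpnt 𝔽 Y).eval a)

/-- Weak equivalence: the same probability distribution. -/
def WeakEquiv [Fintype P] (𝔽 𝔾 : Program P) : Prop :=
  ∀ X : Finset P, Pr 𝔽 X = Pr 𝔾 X

/-- Strong equivalence of LP^MLN programs. -/
def StrongEquiv [Fintype P] (𝔽 𝔾 : Program P) : Prop :=
  ∀ (ℍ : Program P) (X : Finset P), Pr (𝔽 ∪ ℍ) X = Pr (𝔾 ∪ ℍ) X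

/-- Structural equivalence of LP^MLN programs. -/
def StructEquiv (𝔽 𝔾 : Program P) : Prop :=
  ∀ (ℍ : Program P) (X : Finset P), SoftStable (𝔽 ∪ ℍ) X ↔ SoftStable (𝔾 ∪ ℍ) X

/-- HT satisfaction `⟨Y,X⟩ ⊨ₕₜ F` (at the world "here"). -/
def htSat (Y X : Finset P) : Formula P → Prop
  | .atom p => p ∈ Y
  | .bot => False
  | .and F G => htSat Y X F ∧ htSat Y X G
  | .or F G => htSat Y X F ∨ htSat Y X G
  | .imp F G => (htSat Y X F → htSat Y X G) ∧ (Formula.imp F G).sat X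

/-- `⟨Y,X⟩` is an HT model of a set `Γ` of formulas. -/
def HTModel (Γ : Finset (Formula P)) (Y X : Finset P) : Prop :=
  Y ⊆ X ∧ ∀ F ∈ Γ, htSat Y X F

/-- `⟨Y,X⟩` is a soft HT model of an LP^MLN program `𝔽`. -/
def SoftHT (𝔽 : Program P) (Y X : Finset P) : Prop :=
  Y ⊆ X ∧ ∀ r ∈ progSat 𝔽 X, htSat Y X r.2

/-- The choice formula `{F}^ch = F ∨ ¬F`. -/
def Formula.ch (F : Formula P) : Formula P := .or F F.neg

/-- `{Γ}^ch`, choice formulas of a set of formulas. -/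
def chSet (Γ : Finset (Formula P)) : Finset (Formula P) := Γ.image Formula.ch

/-- Renaming of atoms. -/
def Formula.rename {Q : Type} (f : P → Q) : Formula P → Formula Q
  | .atom p => .atom (f p)
  | .bot => .bot
  | .and F G => .and (F.rename f) (G.rename f)
  | .or F G => .or (F.rename f) (G.rename f)
  | .imp F G => .imp (F.rename f) (G.rename f)

/-- `Δ_{𝒫'}(F)`, a formula over `𝒫 ∪ 𝒫'`; unprimed atoms are `Sum.inl p`,
primed atoms `p'` are `Sum.inr p`. -/
def Formula.delta : Formula P → Formula (P ⊕ P)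
  | .atom p => .atom (Sum.inr p)
  | .bot => .bot
  | .and F G => .and F.delta G.delta
  | .or F G => .or F.delta G.delta
  | .imp F G => .and (.imp F.delta G.delta)
      (.imp (F.rename Sum.inl) (G.rename Sum.inl))

/-- `Δ_{𝒫'}(Γ)` for a set of formulas. -/
def deltaSet (Γ : Finset (Formula P)) : Finset (Formula (P ⊕ P)) :=
  Γ.image Formula.delta

/-- The interpretation `Y' ∪ X` of `𝒫 ∪ 𝒫'`. -/
def primedInterp (Y X : Finset P) : Finset (P ⊕ P) :=
  X.image Sum.inl ∪ Y.image Sum.inr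

/- The reduct `F^X` is exactly the "here" world of `⟨Y, X⟩` read classically: by induction on
`F`, `⟨Y,X⟩ ⊨ₕₜ F` iff `Y ⊨ F^X`, since both sides fail as soon as `X ⊭ F`. For a choice
formula, `({F}^ch)^X` is `F^X ∨ ⊥` when `X ⊨ F` and `⊥ ∨ (⊥ → ⊥)` otherwise, so it only constrains
the rules satisfied by `X`, which are those of `𝔽_X`. -/

namespace Formula

variable {X Y : Finset P} {F G : Formula P}

@[simp] lemma sat_atom {p : P} : (atom p).sat X ↔ p ∈ X := by
  simp [sat, eval]

@[simp] lemma not_sat_bot : ¬ (bot : Formula P).sat X := by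
  simp [sat, eval]

@[simp] lemma sat_and : (and F G).sat X ↔ F.sat X ∧ G.sat X := by
  simp [sat, eval]

@[simp] lemma sat_or : (or F G).sat X ↔ F.sat X ∨ G.sat X := by
  simp [sat, eval]

@[simp] lemma sat_imp : (imp F G).sat X ↔ (F.sat X → G.sat X) := by
  simp [sat, eval, imp_iff_not_or]

lemma reduct_eq_bot_of_not_sat (h : ¬ F.sat X) : F.reduct X = bot := by
  cases F with
  | atom p => simp_all [reduct]
  | bot => rfl
  | and F G | or F G | imp F G => simp_all [reduct, sat]

lemma sat_of_htSat (hYX : Y ⊆ X) : htSat Y X F → F.sat X := by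
  induction F with
  | atom p => exact fun h => sat_atom.mpr (hYX h)
  | bot => exact False.elim
  | and F G ihF ihG => exact fun h => sat_and.mpr ⟨ihF h.1, ihG h.2⟩
  | or F G ihF ihG => exact fun h => sat_or.mpr (h.imp ihF ihG)
  | imp F G => exact And.right

lemma htSat_iff_of_not_sat (hYX : Y ⊆ X) (h : ¬ F.sat X) :
    htSat Y X F ↔ (F.reduct X).sat Y := by
  rw [reduct_eq_bot_of_not_sat h]
  exact iff_of_false (fun hF => h (sat_of_htSat hYX hF)) not_sat_bot

lemma reduct_and_of_sat (h : (and F G).sat X) :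
    (and F G).reduct X = and (F.reduct X) (G.reduct X) := if_pos h

lemma reduct_or_of_sat (h : (or F G).sat X) :
    (or F G).reduct X = or (F.reduct X) (G.reduct X) := if_pos h

lemma reduct_imp_of_sat (h : (imp F G).sat X) :
    (imp F G).reduct X = imp (F.reduct X) (G.reduct X) := if_pos h

theorem htSat_iff_sat_reduct (hYX : Y ⊆ X) (F : Formula P) :
    htSat Y X F ↔ (F.reduct X).sat Y := by
  induction F with
  | atom p =>
    by_cases hX : (atom p).sat X
    · simp_all [htSat, reduct]
    · exact htSat_iff_of_not_sat hYX hX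
  | bot => simp [htSat, reduct]
  | and F G ihF ihG =>
    by_cases hX : (and F G).sat X
    · simp only [reduct_and_of_sat hX, htSat, sat_and, ihF, ihG]
    · exact htSat_iff_of_not_sat hYX hX
  | or F G ihF ihG =>
    by_cases hX : (or F G).sat X
    · simp only [reduct_or_of_sat hX, htSat, sat_or, ihF, ihG]
    · exact htSat_iff_of_not_sat hYX hX
  | imp F G ihF ihG =>
    by_cases hX : (imp F G).sat X
    · simp only [reduct_imp_of_sat hX, htSat, sat_imp, ihF, ihG, hX, and_true]
    · exact htSat_iff_of_not_sat hYX hX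

lemma sat_ch : F.ch.sat X := by
  by_cases hF : F.sat X <;> simp [ch, neg, hF]

lemma sat_reduct_ch_iff : (F.ch.reduct X).sat Y ↔ (F.sat X → (F.reduct X).sat Y) := by
  rw [show F.ch = or F F.neg from rfl, reduct_or_of_sat sat_ch]
  by_cases hF : F.sat X
  · have hneg : ¬ F.neg.sat X := by simp [neg, hF]
    simp [reduct_eq_bot_of_not_sat hneg, hF]
  · have hneg : F.neg.sat X := by simp [neg, hF]
    simp [neg, reduct_imp_of_sat hneg, reduct_eq_bot_of_not_sat hF, hF, reduct]

end Formula

lemma satSet_reductSet_iff {Γ : Finset (Formula P)} {X Y : Finset P} :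
    satSet Y (reductSet X Γ) ↔ ∀ F ∈ Γ, (F.reduct X).sat Y :=
  Finset.forall_mem_image

lemma satSet_reductSet_chSet_iff {Γ : Finset (Formula P)} {X Y : Finset P} :
    satSet Y (reductSet X (chSet Γ)) ↔ ∀ F ∈ Γ, F.sat X → (F.reduct X).sat Y := by
  simp only [satSet_reductSet_iff, chSet, Finset.forall_mem_image, Formula.sat_reduct_ch_iff]

lemma satSet_reductSet_formulas_progSat_iff {𝔽 : Program P} {X Y : Finset P} :
    satSet Y (reductSet X (formulas (progSat 𝔽 X))) ↔
      ∀ F ∈ formulas 𝔽, F.sat X → (F.reduct X).sat Y := by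
  simp [satSet_reductSet_iff, formulas, progSat, Formula.sat]

lemma softHT_iff_satSet_reductSet {𝔽 : Program P} {X Y : Finset P} (hYX : Y ⊆ X) :
    SoftHT 𝔽 Y X ↔ satSet Y (reductSet X (formulas (progSat 𝔽 X))) := by
  simp only [SoftHT, hYX, true_and, satSet_reductSet_iff, formulas, Finset.forall_mem_image,
    Formula.htSat_iff_sat_reduct hYX]

/-- for `Y ⊆ X`, the following are equivalent: (a) `⟨Y,X⟩` is a soft HT model
of `𝔽`; (b) `Y ⊨ (𝔽̄_X)^X`; (c) `Y ⊨ ({𝔽̄}^ch)^X`. -/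
theorem stmt14 {P : Type} [DecidableEq P] (𝔽 : Program P) (Y X : Finset P) (hYX : Y ⊆ X) :
    (SoftHT 𝔽 Y X ↔ satSet Y (reductSet X (formulas (progSat 𝔽 X)))) ∧
    (satSet Y (reductSet X (formulas (progSat 𝔽 X))) ↔
      satSet Y (reductSet X (chSet (formulas 𝔽)))) := by
  rw [satSet_reductSet_chSet_iff, ← satSet_reductSet_formulas_progSat_iff]
  exact ⟨softHT_iff_satSet_reductSet hYX, Iff.rfl⟩

end LPMLN
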